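/- Let ω ∈ ℝ^ℓ belong to the Diophantine class D^aff(ν,τ), i.e. |ω·k|^{-1} ≤ ν|k|^τ for every k ∈ ℤ^ℓ \ {0}, and let η: ℝ^ℓ → ℂ be given by an absolutely convergent Fourier series η(θ) = Σ_{k∈ℤ^ℓ} η̂_k e^{2πi k·θ} with η̂_0 = 0 and |η̂_k| ≤ M e^{−δ|k|} for some M > 0, δ > 0. Then the series φ(θ) = Σ_{k≠0} η̂_k (2πi k·ω)^{−1} e^{2πi k·θ} converges absolutely and uniformly, defines a C¹ ℤ^ℓ-periodic function, and ∂_ω φ(θ) := Σ_{j=1}^ℓ ω_j ∂φ/∂θ_j (θ) = η(θ) for every θ ∈ ℝ^ℓ. -/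

import Mathlib

/-! By the Diophantine condition the coefficients `η̂_k (2πi k·ω)⁻¹` of `φ`, even after
multiplication by `|k|`, are bounded by a multiple of `|k|^(τ+1) e^{-δ|k|}`, which is summable over
`ℤ^ℓ` since the exponential beats every power of `|k|`. By the Weierstrass M-test both the series
of `φ` and the series of its termwise differentials converge uniformly, so `φ` is `C¹` and is
differentiated term by term. Differentiating `e^{2πi k·θ}` in the direction `ω` multiplies it by
exactly the small divisor `2πi k·ω`, which cancels and leaves the Fourier series of `η`. -/

/-- The `k`-th term of the formal solution of the small divisor equation
`∂_ω φ = η` for flows, namely `η̂_k (2πi k·ω)⁻¹ e^{2πi k·θ}`. -/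
noncomputable def phiFlowTerm (ℓ : ℕ) (ηhat : (Fin ℓ → ℤ) → ℂ) (ω : Fin ℓ → ℝ)
    (k : Fin ℓ → ℤ) (θ : Fin ℓ → ℝ) : ℂ :=
  ηhat k *
    (((2 * Real.pi : ℝ) : ℂ) * Complex.I * ((∑ i, (k i : ℝ) * ω i : ℝ) : ℂ))⁻¹ *
    Complex.exp (((2 * Real.pi : ℝ) : ℂ) * Complex.I *
      ((∑ i, (k i : ℝ) * θ i : ℝ) : ℂ))

open Real Finset Filter

lemma summable_exp_neg_mul_abs_int {c : ℝ} (hc : 0 < c) :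
    Summable fun n : ℤ => exp (-c * |(n : ℝ)|) := by
  have hgeom : Summable fun n : ℕ => exp (-c * n) := by
    simpa only [← exp_nat_mul, mul_comm] using
      summable_geometric_of_lt_one (exp_pos (-c)).le (exp_lt_one_iff.mpr (neg_neg_of_pos hc))
  exact .of_nat_of_neg (by simpa using hgeom) (by simpa using hgeom)

lemma summable_prod_fin_of_nonneg {α : Type*} {f : α → ℝ} (hf₀ : 0 ≤ f) (hf : Summable f) :
    ∀ ℓ : ℕ, Summable fun k : Fin ℓ → α => ∏ i, f (k i)
  | 0 => .of_finite
  | ℓ + 1 => by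
    rw [← (Fin.consEquiv fun _ => α).summable_iff]
    simpa [Function.comp_def, Fin.prod_univ_succ, Fin.consEquiv] using
      hf.mul_of_nonneg (summable_prod_fin_of_nonneg hf₀ hf ℓ) hf₀
        fun _ => prod_nonneg fun i _ => hf₀ _

lemma summable_exp_neg_mul_sum_abs {c : ℝ} (hc : 0 < c) (ℓ : ℕ) :
    Summable fun k : Fin ℓ → ℤ => exp (-c * ∑ i, |(k i : ℝ)|) := by
  simpa only [mul_sum, exp_sum] using
    summable_prod_fin_of_nonneg (fun _ => (exp_pos _).le) (summable_exp_neg_mul_abs_int hc) ℓ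

lemma exists_rpow_le_mul_exp (s : ℝ) {c : ℝ} (hc : 0 < c) :
    ∃ C, ∀ x : ℝ, 1 ≤ x → x ^ s ≤ C * exp (c * x) := by
  set n := ⌈s⌉₊
  refine ⟨n.factorial / c ^ n, fun x hx => ?_⟩
  have hexp := pow_div_factorial_le_exp (c * x) (by positivity) n
  calc x ^ s ≤ x ^ (n : ℝ) := rpow_le_rpow_of_exponent_le hx (Nat.le_ceil s)
    _ = (c * x) ^ n / n.factorial * (n.factorial / c ^ n) := by
        rw [rpow_natCast, mul_pow]; field_simp
    _ ≤ exp (c * x) * (n.factorial / c ^ n) := by gcongr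
    _ = _ := mul_comm _ _

lemma one_le_sum_abs_intCast {ι : Type*} [Fintype ι] {k : ι → ℤ} (hk : k ≠ 0) :
    1 ≤ ∑ i, |(k i : ℝ)| := by
  obtain ⟨i, hi⟩ := Function.ne_iff.mp hk
  calc (1 : ℝ) ≤ |(k i : ℝ)| := by exact_mod_cast Int.one_le_abs hi
    _ ≤ ∑ j, |(k j : ℝ)| := single_le_sum (fun j _ => abs_nonneg (k j : ℝ)) (mem_univ i)

lemma summable_rpow_mul_exp_neg_mul_sum_abs (s : ℝ) {c : ℝ} (hc : 0 < c) (ℓ : ℕ) :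
    Summable fun k : Fin ℓ → ℤ =>
      (∑ i, |(k i : ℝ)|) ^ s * exp (-c * ∑ i, |(k i : ℝ)|) := by
  obtain ⟨C, hC⟩ := exists_rpow_le_mul_exp s (half_pos hc)
  refine .of_norm_bounded_eventually ((summable_exp_neg_mul_sum_abs (half_pos hc) ℓ).mul_left C) ?_
  filter_upwards [eventually_cofinite_ne 0] with k hk
  set K := ∑ i, |(k i : ℝ)|
  have hK : 1 ≤ K := one_le_sum_abs_intCast hk
  calc ‖K ^ s * exp (-c * K)‖ = K ^ s * exp (-c * K) :=
        norm_of_nonneg (by positivity)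
    _ ≤ C * exp (c / 2 * K) * exp (-c * K) := by gcongr; exact hC K hK
    _ = C * exp (-(c / 2) * K) := by rw [mul_assoc, ← exp_add]; ring_nf

noncomputable def fourierMode {ℓ : ℕ} (k : Fin ℓ → ℤ) (θ : Fin ℓ → ℝ) : ℂ :=
  Complex.exp (((2 * π : ℝ) : ℂ) * Complex.I * ((∑ i, (k i : ℝ) * θ i : ℝ) : ℂ))

noncomputable def intDotCLM {ℓ : ℕ} (k : Fin ℓ → ℤ) : (Fin ℓ → ℝ) →L[ℝ] ℝ :=
  ∑ i, (k i : ℝ) • ContinuousLinearMap.proj i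

noncomputable def fourierModeDeriv {ℓ : ℕ} (k : Fin ℓ → ℤ) (θ : Fin ℓ → ℝ) :
    (Fin ℓ → ℝ) →L[ℝ] ℂ :=
  (fourierMode k θ * (((2 * π : ℝ) : ℂ) * Complex.I)) • Complex.ofRealCLM.comp (intDotCLM k)

section FourierMode

variable {ℓ : ℕ} (k : Fin ℓ → ℤ)

@[simp]
lemma intDotCLM_apply (θ : Fin ℓ → ℝ) : intDotCLM k θ = ∑ i, (k i : ℝ) * θ i := by
  simp [intDotCLM]

lemma norm_intDotCLM_le : ‖intDotCLM k‖ ≤ ∑ i, |(k i : ℝ)| := by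
  refine ContinuousLinearMap.opNorm_le_bound _ (sum_nonneg fun i _ => abs_nonneg _) fun θ => ?_
  rw [intDotCLM_apply, norm_eq_abs, sum_mul]
  refine (abs_sum_le_sum_abs _ _).trans (sum_le_sum fun i _ => ?_)
  rw [abs_mul]
  exact mul_le_mul_of_nonneg_left (norm_le_pi_norm θ i) (abs_nonneg _)

lemma norm_fourierMode (θ : Fin ℓ → ℝ) : ‖fourierMode k θ‖ = 1 := by
  rw [fourierMode, mul_comm _ Complex.I, mul_assoc, mul_comm, ← Complex.ofReal_mul,
    Complex.norm_exp_ofReal_mul_I]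

lemma fourierMode_add_intCast (θ : Fin ℓ → ℝ) (e : Fin ℓ → ℤ) :
    fourierMode k (θ + fun i => (e i : ℝ)) = fourierMode k θ := by
  have hdot : ∑ i, (k i : ℝ) * (θ + fun i => (e i : ℝ)) i =
      ∑ i, (k i : ℝ) * θ i + ((∑ i, k i * e i : ℤ) : ℝ) := by
    push_cast
    simp only [Pi.add_apply, mul_add, sum_add_distrib]
  have hperiod : ((2 * π : ℝ) : ℂ) * Complex.I * (((∑ i, k i * e i : ℤ) : ℝ) : ℂ) =
      (∑ i, k i * e i : ℤ) * (2 * π * Complex.I) := by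
    push_cast; ring
  rw [fourierMode, fourierMode, hdot, Complex.ofReal_add, mul_add, Complex.exp_add, hperiod,
    Complex.exp_int_mul_two_pi_mul_I, mul_one]

lemma hasFDerivAt_fourierMode (θ : Fin ℓ → ℝ) :
    HasFDerivAt (fourierMode k) (fourierModeDeriv k θ) θ := by
  have hmode : fourierMode k = fun θ =>
      Complex.exp (((2 * π : ℝ) : ℂ) * Complex.I * Complex.ofRealCLM.comp (intDotCLM k) θ) := by
    ext θ; simp [fourierMode]
  rw [fourierModeDeriv, ← smul_smul, hmode]
  exact (((Complex.ofRealCLM.comp (intDotCLM k)).hasFDerivAt).const_mul _).cexp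

lemma continuous_fourierMode : Continuous (fourierMode k) :=
  continuous_iff_continuousAt.2 fun θ => (hasFDerivAt_fourierMode k θ).continuousAt

lemma fourierModeDeriv_apply (θ v : Fin ℓ → ℝ) :
    fourierModeDeriv k θ v =
      ((2 * π : ℝ) : ℂ) * Complex.I * ((∑ i, (k i : ℝ) * v i : ℝ) : ℂ) * fourierMode k θ := by
  simp only [fourierModeDeriv, smul_apply, ContinuousLinearMap.comp_apply,
    Complex.ofRealCLM_apply, intDotCLM_apply, smul_eq_mul]
  ring

lemma norm_fourierModeDeriv_le (θ : Fin ℓ → ℝ) :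
    ‖fourierModeDeriv k θ‖ ≤ 2 * π * ∑ i, |(k i : ℝ)| := by
  rw [fourierModeDeriv, norm_smul, norm_mul, norm_fourierMode, norm_mul, Complex.norm_I,
    Complex.norm_real, norm_eq_abs, abs_of_pos two_pi_pos, one_mul, mul_one]
  gcongr
  exact (ContinuousLinearMap.opNorm_comp_le _ _).trans
    (by rw [Complex.ofRealCLM_norm, one_mul]; exact norm_intDotCLM_le k)

lemma norm_smul_fourierModeDeriv_le (a : ℂ) (θ : Fin ℓ → ℝ) :
    ‖a • fourierModeDeriv k θ‖ ≤ 2 * π * (‖a‖ * ∑ i, |(k i : ℝ)|) := by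
  rw [norm_smul, mul_left_comm]
  exact mul_le_mul_of_nonneg_left (norm_fourierModeDeriv_le k θ) (norm_nonneg a)

lemma continuous_fourierModeDeriv : Continuous (fourierModeDeriv k) :=
  ((continuous_fourierMode k).mul continuous_const).smul continuous_const

end FourierMode

noncomputable def fourierSum {ℓ : ℕ} (c : (Fin ℓ → ℤ) → ℂ) (θ : Fin ℓ → ℝ) : ℂ :=
  ∑' k, c k * fourierMode k θ

section FourierSum

variable {ℓ : ℕ} {c : (Fin ℓ → ℤ) → ℂ}

lemma norm_mul_fourierMode (a : ℂ) (k : Fin ℓ → ℤ) (θ : Fin ℓ → ℝ) :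
    ‖a * fourierMode k θ‖ = ‖a‖ := by
  rw [norm_mul, norm_fourierMode, mul_one]

lemma fourierSum_add_intCast (c : (Fin ℓ → ℤ) → ℂ) (θ : Fin ℓ → ℝ) (e : Fin ℓ → ℤ) :
    fourierSum c (θ + fun i => (e i : ℝ)) = fourierSum c θ :=
  tsum_congr fun k => by rw [fourierMode_add_intCast]

variable (hc : Summable fun k => ‖c k‖)
include hc

lemma summable_norm_mul_fourierMode (θ : Fin ℓ → ℝ) :
    Summable fun k => ‖c k * fourierMode k θ‖ := by
  simpa only [norm_mul_fourierMode] using hc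

lemma hasSum_fourierSum (θ : Fin ℓ → ℝ) :
    HasSum (fun k => c k * fourierMode k θ) (fourierSum c θ) :=
  (summable_norm_mul_fourierMode hc θ).of_norm.hasSum

lemma tendstoUniformly_fourierSum :
    TendstoUniformly (fun (s : Finset (Fin ℓ → ℤ)) θ => ∑ k ∈ s, c k * fourierMode k θ)
      (fourierSum c) atTop :=
  tendstoUniformly_tsum hc fun k θ => (norm_mul_fourierMode (c k) k θ).le

variable (hc₁ : Summable fun k => ‖c k‖ * ∑ i, |(k i : ℝ)|)
include hc₁

lemma hasFDerivAt_fourierSum (θ : Fin ℓ → ℝ) :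
    HasFDerivAt (fourierSum c) (∑' k, c k • fourierModeDeriv k θ) θ :=
  hasFDerivAt_tsum (hc₁.mul_left (2 * π))
    (fun k θ => (hasFDerivAt_fourierMode k θ).const_mul (c k))
    (fun k θ => norm_smul_fourierModeDeriv_le k (c k) θ)
    (summable_norm_mul_fourierMode hc 0).of_norm θ

lemma contDiff_fourierSum : ContDiff ℝ 1 (fourierSum c) := by
  have hfderiv : fderiv ℝ (fourierSum c) = fun θ => ∑' k, c k • fourierModeDeriv k θ :=
    funext fun θ => (hasFDerivAt_fourierSum hc hc₁ θ).fderiv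
  refine contDiff_one_iff_fderiv.2
    ⟨fun θ => (hasFDerivAt_fourierSum hc hc₁ θ).differentiableAt, hfderiv ▸ ?_⟩
  exact continuous_tsum (fun k => (continuous_fourierModeDeriv k).const_smul (c k))
    (hc₁.mul_left (2 * π)) fun k θ => norm_smul_fourierModeDeriv_le k (c k) θ

lemma hasSum_fderiv_fourierSum_apply (θ v : Fin ℓ → ℝ) :
    HasSum (fun k => c k * (((2 * π : ℝ) : ℂ) * Complex.I * ((∑ i, (k i : ℝ) * v i : ℝ) : ℂ)) *
      fourierMode k θ) (fderiv ℝ (fourierSum c) θ v) := by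
  have hs : Summable fun k => c k • fourierModeDeriv k θ :=
    .of_norm_bounded (hc₁.mul_left (2 * π)) fun k => norm_smul_fourierModeDeriv_le k (c k) θ
  rw [(hasFDerivAt_fourierSum hc hc₁ θ).fderiv]
  simpa only [ContinuousLinearMap.apply_apply, smul_apply, fourierModeDeriv_apply, smul_eq_mul,
    mul_assoc] using hs.hasSum.mapL (ContinuousLinearMap.apply ℝ ℂ v)

end FourierSum

lemma norm_mul_inv_two_pi_I_mul_le (a : ℂ) {d B : ℝ} (hB : 0 < B) (hd : B⁻¹ ≤ |d|) :
    ‖a * (((2 * π : ℝ) : ℂ) * Complex.I * (d : ℂ))⁻¹‖ ≤ ‖a‖ * B / (2 * π) := by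
  have hnorm : ‖a * (((2 * π : ℝ) : ℂ) * Complex.I * (d : ℂ))⁻¹‖ = ‖a‖ * |d|⁻¹ / (2 * π) := by
    rw [norm_mul, norm_inv, norm_mul, norm_mul, Complex.norm_I, Complex.norm_real,
      Complex.norm_real, norm_eq_abs, norm_eq_abs, abs_of_pos two_pi_pos, mul_one, mul_inv,
      div_eq_mul_inv]
    ring
  rw [hnorm]
  gcongr
  exact inv_le_of_inv_le₀ hB hd

noncomputable def smallDivisorCoeff {ℓ : ℕ} (ηhat : (Fin ℓ → ℤ) → ℂ) (ω : Fin ℓ → ℝ)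
    (k : Fin ℓ → ℤ) : ℂ :=
  ηhat k * (((2 * π : ℝ) : ℂ) * Complex.I * ((∑ i, (k i : ℝ) * ω i : ℝ) : ℂ))⁻¹

lemma smallDivisorCoeff_mul_cancel {ℓ : ℕ} (ηhat : (Fin ℓ → ℤ) → ℂ) {ω : Fin ℓ → ℝ}
    {k : Fin ℓ → ℤ} (hd : ∑ i, (k i : ℝ) * ω i ≠ 0) :
    smallDivisorCoeff ηhat ω k * (((2 * π : ℝ) : ℂ) * Complex.I * ((∑ i, (k i : ℝ) * ω i : ℝ) : ℂ))
      = ηhat k :=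
  inv_mul_cancel_right₀ (mul_ne_zero (mul_ne_zero (by simp [pi_ne_zero]) Complex.I_ne_zero)
    (Complex.ofReal_ne_zero.2 hd)) _

section Diophantine

variable {ℓ : ℕ} {ν τ : ℝ} {ω : Fin ℓ → ℝ} (hν : 0 < ν)
  (hdio : ∀ k : Fin ℓ → ℤ, k ≠ 0 → (ν * (∑ i, |(k i : ℝ)|) ^ τ)⁻¹ ≤ |(∑ i, (k i : ℝ) * ω i)|)
include hν hdio

lemma sum_mul_ne_zero_of_diophantine {k : Fin ℓ → ℤ} (hk : k ≠ 0) :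
    ∑ i, (k i : ℝ) * ω i ≠ 0 := by
  have hK : 0 < ∑ i, |(k i : ℝ)| := one_pos.trans_le (one_le_sum_abs_intCast hk)
  exact abs_pos.mp ((inv_pos.2 (by positivity)).trans_le (hdio k hk))

lemma summable_norm_smallDivisorCoeff_mul_rpow {M δ : ℝ} (hδ : 0 < δ) {ηhat : (Fin ℓ → ℤ) → ℂ}
    (hdecay : ∀ k : Fin ℓ → ℤ, ‖ηhat k‖ ≤ M * exp (-δ * (∑ i, |(k i : ℝ)|))) (s : ℝ) :
    Summable fun k : Fin ℓ → ℤ => ‖smallDivisorCoeff ηhat ω k‖ * (∑ i, |(k i : ℝ)|) ^ s := by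
  refine .of_norm_bounded_eventually
    ((summable_rpow_mul_exp_neg_mul_sum_abs (τ + s) hδ ℓ).mul_left (M * ν / (2 * π))) ?_
  filter_upwards [eventually_cofinite_ne 0] with k hk
  set K := ∑ i, |(k i : ℝ)|
  have hK : 0 < K := one_pos.trans_le (one_le_sum_abs_intCast hk)
  have hcoeff := norm_mul_inv_two_pi_I_mul_le (ηhat k) (by positivity) (hdio k hk)
  rw [norm_of_nonneg (by positivity), rpow_add hK]
  calc _ ≤ ‖ηhat k‖ * (ν * K ^ τ) / (2 * π) * K ^ s := by gcongr; exact hcoeff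
    _ ≤ M * exp (-δ * K) * (ν * K ^ τ) / (2 * π) * K ^ s := by gcongr; exact hdecay k
    _ = _ := by ring

end Diophantine

theorem stmt3_general (ℓ : ℕ) (ν τ M δ : ℝ) (hν : 0 < ν) (hδ : 0 < δ)
    (ω : Fin ℓ → ℝ)
    (hdio : ∀ k : Fin ℓ → ℤ, k ≠ 0 →
      (ν * (∑ i, |(k i : ℝ)|) ^ τ)⁻¹ ≤ |(∑ i, (k i : ℝ) * ω i)|)
    (ηhat : (Fin ℓ → ℤ) → ℂ) (hη0 : ηhat 0 = 0)
    (hdecay : ∀ k : Fin ℓ → ℤ,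
      ‖ηhat k‖ ≤ M * Real.exp (-δ * (∑ i, |(k i : ℝ)|)))
    (η : (Fin ℓ → ℝ) → ℂ)
    (hηsum : ∀ θ : Fin ℓ → ℝ, HasSum (fun k : Fin ℓ → ℤ =>
      ηhat k * Complex.exp (((2 * Real.pi : ℝ) : ℂ) * Complex.I *
        ((∑ i, (k i : ℝ) * θ i : ℝ) : ℂ))) (η θ)) :
    ∃ φ : (Fin ℓ → ℝ) → ℂ,
      (∀ θ, Summable (fun k : Fin ℓ → ℤ => ‖phiFlowTerm ℓ ηhat ω k θ‖)) ∧
      (∀ θ, HasSum (fun k : Fin ℓ → ℤ => phiFlowTerm ℓ ηhat ω k θ) (φ θ)) ∧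
      TendstoUniformly
        (fun (s : Finset (Fin ℓ → ℤ)) (θ : Fin ℓ → ℝ) =>
          ∑ k ∈ s, phiFlowTerm ℓ ηhat ω k θ)
        φ Filter.atTop ∧
      ContDiff ℝ 1 φ ∧
      (∀ (θ : Fin ℓ → ℝ) (e : Fin ℓ → ℤ), φ (θ + fun i => (e i : ℝ)) = φ θ) ∧
      (∀ θ, fderiv ℝ φ θ ω = η θ) := by
  set c := smallDivisorCoeff ηhat ω
  have hc : Summable fun k => ‖c k‖ := by
    simpa only [rpow_zero, mul_one] using
      summable_norm_smallDivisorCoeff_mul_rpow hν hdio hδ hdecay 0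
  have hc₁ : Summable fun k => ‖c k‖ * ∑ i, |(k i : ℝ)| := by
    simpa only [rpow_one] using summable_norm_smallDivisorCoeff_mul_rpow hν hdio hδ hdecay 1
  have hsolve : ∀ k,
      c k * (((2 * π : ℝ) : ℂ) * Complex.I * ((∑ i, (k i : ℝ) * ω i : ℝ) : ℂ)) = ηhat k := by
    intro k
    rcases eq_or_ne k 0 with rfl | hk
    · simp [c, smallDivisorCoeff, hη0]
    · exact smallDivisorCoeff_mul_cancel ηhat (sum_mul_ne_zero_of_diophantine hν hdio hk)
  -- `phiFlowTerm ℓ ηhat ω k θ` unfolds to `c k * fourierMode k θ`.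
  refine ⟨fourierSum c, summable_norm_mul_fourierMode hc, hasSum_fourierSum hc,
    tendstoUniformly_fourierSum hc, contDiff_fourierSum hc hc₁, fourierSum_add_intCast c,
    fun θ => (hasSum_fderiv_fourierSum_apply hc hc₁ θ ω).unique ?_⟩
  simp only [hsolve]
  exact hηsum θ

/-- For a frequency `ω` in the affine Diophantine class `D^aff(ν,τ)`
(`|ω·k| ≥ (ν|k|^τ)⁻¹` for all nonzero `k ∈ ℤ^ℓ`) and a function `η` given by an
absolutely convergent Fourier series with `η̂_0 = 0` and exponentially decaying
coefficients, the series `φ(θ) = Σ_{k≠0} η̂_k (2πi k·ω)⁻¹ e^{2πi k·θ}` converges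
absolutely and uniformly, defines a `C¹` `ℤ^ℓ`-periodic function, and solves the
small divisor equation `∂_ω φ = η`, where `∂_ω φ(θ) = Dφ(θ)[ω]`.  (Since `η̂_0 = 0`,
the `k = 0` term vanishes and the sum may be taken over all of `ℤ^ℓ`.) -/
theorem stmt3 (ℓ : ℕ) (ν τ M δ : ℝ) (hν : 0 < ν) (hM : 0 < M) (hδ : 0 < δ)
    (ω : Fin ℓ → ℝ)
    (hdio : ∀ k : Fin ℓ → ℤ, k ≠ 0 →
      (ν * (∑ i, |(k i : ℝ)|) ^ τ)⁻¹ ≤ |(∑ i, (k i : ℝ) * ω i)|)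
    (ηhat : (Fin ℓ → ℤ) → ℂ) (hη0 : ηhat 0 = 0)
    (hdecay : ∀ k : Fin ℓ → ℤ,
      ‖ηhat k‖ ≤ M * Real.exp (-δ * (∑ i, |(k i : ℝ)|)))
    (η : (Fin ℓ → ℝ) → ℂ)
    (hηsum : ∀ θ : Fin ℓ → ℝ, HasSum (fun k : Fin ℓ → ℤ =>
      ηhat k * Complex.exp (((2 * Real.pi : ℝ) : ℂ) * Complex.I *
        ((∑ i, (k i : ℝ) * θ i : ℝ) : ℂ))) (η θ)) :
    ∃ φ : (Fin ℓ → ℝ) → ℂ,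
      (∀ θ, Summable (fun k : Fin ℓ → ℤ => ‖phiFlowTerm ℓ ηhat ω k θ‖)) ∧
      (∀ θ, HasSum (fun k : Fin ℓ → ℤ => phiFlowTerm ℓ ηhat ω k θ) (φ θ)) ∧
      TendstoUniformly
        (fun (s : Finset (Fin ℓ → ℤ)) (θ : Fin ℓ → ℝ) =>
          ∑ k ∈ s, phiFlowTerm ℓ ηhat ω k θ)
        φ Filter.atTop ∧
      ContDiff ℝ 1 φ ∧
      (∀ (θ : Fin ℓ → ℝ) (e : Fin ℓ → ℤ), φ (θ + fun i => (e i : ℝ)) = φ θ) ∧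
      (∀ θ, fderiv ℝ φ θ ω = η θ) :=
  stmt3_general ℓ ν τ M δ hν hδ ω hdio ηhat hη0 hdecay η hηsum
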